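/- For n ≥ 1 and t ≥ 1, the trace norm of A = Σ_{k ∈ Ω_n} Σ_{i : Fin t → (Fin n → ZMod 2)} Σ_{x : Fin t → ZMod 2, x ≠ 0} E(i, fun s ↦ i s + (x s)•k) satisfies ‖A‖_tr ≤ 2^{nt} · √(2^{n−1}·(2^t − 1)). -/

import Mathlib

open Matrix Finset ComplexOrder

/-- Hamming weight of a bit string. -/
def hammingW {n : ℕ} (ν : Fin n → ZMod 2) : ℕ :=
  (Finset.univ.filter fun l => ν l = 1).card

/-- `Ω_n`: the bit strings of length `n` with odd Hamming weight. -/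
def Omega (n : ℕ) : Finset (Fin n → ZMod 2) :=
  Finset.univ.filter fun k => Odd (hammingW k)

/-- `|A|` is the positive semidefinite square root of `AᴴA`. -/
noncomputable def matAbs {m : Type*} [Fintype m] [DecidableEq m] (A : Matrix m m ℂ) :
    Matrix m m ℂ :=
  ((Matrix.posSemidef_conjTranspose_mul_self A).isHermitian.eigenvectorUnitary : Matrix m m ℂ) *
    diagonal (((↑) : ℝ → ℂ) ∘ (√·) ∘
      (Matrix.posSemidef_conjTranspose_mul_self A).isHermitian.eigenvalues) *
    (star (Matrix.posSemidef_conjTranspose_mul_self A).isHermitian.eigenvectorUnitary :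
      Matrix m m ℂ)

/-- The trace norm `‖A‖_tr = tr |A|` (a real number). -/
noncomputable def traceNorm {m : Type*} [Fintype m] [DecidableEq m] (A : Matrix m m ℂ) : ℝ :=
  (matAbs A).trace.re

/-
Over `ZMod 2` the displacement `s ↦ x s • k` determines the pair `(k, x)` (for `k, x ≠ 0`), so
`A` is the Cayley matrix of a set `D` of `2^(n-1) (2^t - 1)` displacements in the group
`G = Fin t → Fin n → ZMod 2`: every row of this 0/1 matrix has exactly `#D` ones, and
`‖A‖_F² = |G| · #D`. Finally `‖A‖_tr ≤ √|G| · ‖A‖_F`, by Cauchy–Schwarz on the diagonal of `|A|`,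
whose Frobenius norm equals that of `A` because `|A|ᴴ|A| = AᴴA`.
-/

namespace Matrix

variable {m : Type*} [Fintype m]

lemma re_trace_conjTranspose_mul_self (M : Matrix m m ℂ) :
    (Mᴴ * M).trace.re = ∑ i, ∑ j, Complex.normSq (M i j) := by
  rw [Finset.sum_comm]
  simp only [trace, diag, mul_apply, conjTranspose_apply, Complex.re_sum, Complex.normSq_apply,
    Complex.mul_re, Complex.star_def, Complex.conj_re, Complex.conj_im, neg_mul, sub_neg_eq_add]

lemma sq_re_trace_le_card_mul_sum_normSq (B : Matrix m m ℂ) :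
    B.trace.re ^ 2 ≤ Fintype.card m * ∑ i, ∑ j, Complex.normSq (B i j) := by
  have hdiag : ∀ i, (B i i).re ^ 2 ≤ ∑ j, Complex.normSq (B i j) := fun i =>
    calc (B i i).re ^ 2 ≤ Complex.normSq (B i i) := by
          rw [Complex.normSq_apply]; nlinarith [sq_nonneg (B i i).im]
      _ ≤ ∑ j, Complex.normSq (B i j) :=
          single_le_sum (fun j _ => Complex.normSq_nonneg _) (mem_univ i)
  calc B.trace.re ^ 2 = (∑ i, (B i i).re) ^ 2 := by simp [trace, Complex.re_sum]
    _ ≤ Fintype.card m * ∑ i, (B i i).re ^ 2 := by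
        simpa using sq_sum_le_card_mul_sum_sq (s := univ) (f := fun i => (B i i).re)
    _ ≤ Fintype.card m * ∑ i, ∑ j, Complex.normSq (B i j) := by gcongr with i; exact hdiag i

end Matrix

section MatAbs

variable {m : Type*} [Fintype m] [DecidableEq m]

lemma matAbs_posSemidef (A : Matrix m m ℂ) : (matAbs A).PosSemidef := by
  set hA := (posSemidef_conjTranspose_mul_self A).isHermitian
  have hD : (diagonal (((↑) : ℝ → ℂ) ∘ (√·) ∘ hA.eigenvalues)).PosSemidef :=
    posSemidef_diagonal_iff.2 fun i => Complex.zero_le_real.2 (Real.sqrt_nonneg _)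
  simpa only [matAbs, Unitary.coe_star, star_eq_conjTranspose] using
    hD.mul_mul_conjTranspose_same (hA.eigenvectorUnitary : Matrix m m ℂ)

lemma matAbs_mul_self (A : Matrix m m ℂ) : matAbs A * matAbs A = Aᴴ * A := by
  have hP := posSemidef_conjTranspose_mul_self A
  set U : Matrix m m ℂ := ↑hP.isHermitian.eigenvectorUnitary
  have hU : star U * U = 1 := Unitary.coe_star_mul_self hP.isHermitian.eigenvectorUnitary
  have hD : diagonal (((↑) : ℝ → ℂ) ∘ (√·) ∘ hP.isHermitian.eigenvalues) *
      diagonal (((↑) : ℝ → ℂ) ∘ (√·) ∘ hP.isHermitian.eigenvalues) =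
        diagonal (RCLike.ofReal ∘ hP.isHermitian.eigenvalues) := by
    rw [diagonal_mul_diagonal]
    congr 1 with i
    simp only [Function.comp_apply, ← Complex.ofReal_mul,
      Real.mul_self_sqrt (hP.eigenvalues_nonneg i)]
    rfl
  conv_rhs => rw [hP.isHermitian.spectral_theorem, Unitary.conjStarAlgAut_apply, ← hD]
  simp only [matAbs, mul_assoc]
  rw [← mul_assoc (star U) U, hU, one_mul]

lemma sum_normSq_matAbs (A : Matrix m m ℂ) :
    ∑ i, ∑ j, Complex.normSq (matAbs A i j) = ∑ i, ∑ j, Complex.normSq (A i j) := by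
  rw [← re_trace_conjTranspose_mul_self, ← re_trace_conjTranspose_mul_self,
    (matAbs_posSemidef A).isHermitian.eq, matAbs_mul_self]

theorem traceNorm_le_sqrt_card_mul_sum_normSq (A : Matrix m m ℂ) :
    traceNorm A ≤ √(Fintype.card m * ∑ i, ∑ j, Complex.normSq (A i j)) := by
  rw [← sum_normSq_matAbs]
  exact Real.le_sqrt_of_sq_le (sq_re_trace_le_card_mul_sum_normSq _)

end MatAbs

section Cayley

variable {G : Type*} [AddGroup G] [Fintype G] [DecidableEq G]

def cayleyMatrix (D : Finset G) : Matrix G G ℂ :=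
  of fun i j => if -i + j ∈ D then 1 else 0

lemma sum_single_add_eq_cayleyMatrix (D : Finset G) :
    ∑ d ∈ D, ∑ i, single i (i + d) (1 : ℂ) = cayleyMatrix D := by
  ext i j
  simp only [Matrix.sum_apply, single_apply, ite_and, sum_ite_eq', mem_univ, if_true,
    ← eq_neg_add_iff_add_eq, cayleyMatrix, of_apply]

lemma sum_normSq_cayleyMatrix (D : Finset G) :
    ∑ i, ∑ j, Complex.normSq (cayleyMatrix D i j) = Fintype.card G * #D := by
  have hrow : ∀ i : G, ∑ j, Complex.normSq (cayleyMatrix D i j) = #D := fun i => by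
    simp only [cayleyMatrix, of_apply, apply_ite, map_one, map_zero]
    rw [sum_boole]
    exact_mod_cast card_equiv (Equiv.addLeft (-i)) (by simp)
  simp [hrow]

end Cayley

lemma sum_eq_one_iff_odd_hammingW {n : ℕ} (k : Fin n → ZMod 2) :
    ∑ l, k l = 1 ↔ Odd (hammingW k) := by
  have hbit : ∀ a : ZMod 2, a = if a = 1 then 1 else 0 := by decide
  rw [← ZMod.natCast_eq_one_iff_odd, hammingW, natCast_card_filter]
  exact Eq.congr_left (sum_congr rfl fun l _ => hbit (k l))

lemma card_Omega {n : ℕ} (hn : 1 ≤ n) : #(Omega n) = 2 ^ (n - 1) := by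
  let parity : (Fin n → ZMod 2) →+ ZMod 2 :=
    { toFun := fun k => ∑ l, k l, map_zero' := by simp, map_add' := by simp [sum_add_distrib] }
  have hOmega : Omega n = ({k | parity k = 1} : Finset _) := by
    ext k; simp [Omega, parity, sum_eq_one_iff_odd_hammingW]
  have hfiber : #{k | parity k = 1} = #{k | parity k = 0} :=
    AddMonoidHom.card_fiber_eq_of_mem_range parity
      ⟨Pi.single ⟨0, hn⟩ 1, by simp [parity]⟩ ⟨0, parity.map_zero⟩
  have hbit : ∀ a : ZMod 2, a ≠ 1 ↔ a = 0 := by decide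
  have htotal : #{k | parity k = 1} + #{k | parity k = 0} = 2 ^ n := by
    simp_rw [← hbit, card_filter_add_card_filter_not]
    simp
  obtain ⟨n, rfl⟩ := Nat.exists_eq_add_of_le' hn
  rw [pow_succ] at htotal
  rw [hOmega, Nat.add_sub_cancel]
  omega

lemma ne_zero_of_mem_Omega {n : ℕ} {k : Fin n → ZMod 2} (hk : k ∈ Omega n) : k ≠ 0 := by
  rintro rfl
  rw [Omega, mem_filter] at hk
  simp [hammingW] at hk

lemma card_filter_ne_zero (t : ℕ) : #{x : Fin t → ZMod 2 | x ≠ 0} = 2 ^ t - 1 := by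
  simp [filter_ne', card_erase_of_mem, ZMod.card]

lemma injOn_smul_const {ι M : Type*} [AddCommGroup M] [Module (ZMod 2) M] :
    Set.InjOn (fun p : M × (ι → ZMod 2) => fun s => p.2 s • p.1) {p | p.1 ≠ 0 ∧ p.2 ≠ 0} := by
  rintro ⟨k, x⟩ ⟨hk, hx⟩ ⟨k', x'⟩ - h
  have hbit : ∀ a : ZMod 2, a ≠ 0 → a = 1 := by decide
  have key : ∀ s, x s • k = x' s • k' := fun s => congrFun h s
  obtain ⟨s, hs⟩ : ∃ s, x s ≠ 0 := Function.ne_iff.1 hx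
  have hkk : k = x' s • k' := by rw [← key s, hbit _ hs, one_smul]
  have hx's : x' s ≠ 0 := by rintro h0; simp [h0, hk] at hkk
  have hkk' : k = k' := by simpa [hbit _ hx's] using hkk
  subst hkk'
  exact Prod.ext rfl (funext fun s => smul_left_injective (ZMod 2) hk (key s))

theorem traceNorm_deviation_le_general (n t : ℕ) (hn : 1 ≤ n) :
    traceNorm (∑ k ∈ Omega n, ∑ i : Fin t → (Fin n → ZMod 2),
        ∑ x ∈ Finset.univ.filter (fun x : Fin t → ZMod 2 => x ≠ 0),
          Matrix.single i (fun s => i s + x s • k) (1 : ℂ))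
      ≤ 2 ^ (n * t) * Real.sqrt (2 ^ (n - 1) * (2 ^ t - 1)) := by
  set S : Finset ((Fin n → ZMod 2) × (Fin t → ZMod 2)) :=
    Omega n ×ˢ univ.filter fun x => x ≠ 0
  set D : Finset (Fin t → Fin n → ZMod 2) := S.image fun p => fun s => p.2 s • p.1
  have hinj : Set.InjOn (fun p : (Fin n → ZMod 2) × (Fin t → ZMod 2) => fun s => p.2 s • p.1) S :=
    injOn_smul_const.mono fun p hp => by
      obtain ⟨hk, hx⟩ := mem_product.1 hp
      exact ⟨ne_zero_of_mem_Omega hk, (mem_filter.1 hx).2⟩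
  have hA : (∑ k ∈ Omega n, ∑ i : Fin t → (Fin n → ZMod 2),
      ∑ x ∈ Finset.univ.filter (fun x : Fin t → ZMod 2 => x ≠ 0),
        Matrix.single i (fun s => i s + x s • k) (1 : ℂ)) = cayleyMatrix D := by
    rw [← sum_single_add_eq_cayleyMatrix, sum_image hinj, sum_product]
    exact sum_congr rfl fun k _ => sum_comm
  have hD : (#D : ℝ) = 2 ^ (n - 1) * (2 ^ t - 1) := by
    rw [card_image_of_injOn hinj, card_product, card_Omega hn, card_filter_ne_zero]
    push_cast [Nat.cast_sub Nat.one_le_two_pow]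
    norm_num
  have hN : (Fintype.card (Fin t → Fin n → ZMod 2) : ℝ) = 2 ^ (n * t) := by
    simp [ZMod.card, ← pow_mul]
  calc _ ≤ √(2 ^ (n * t) * (2 ^ (n * t) * (2 ^ (n - 1) * (2 ^ t - 1)))) := by
        rw [hA, ← hD, ← hN, ← sum_normSq_cayleyMatrix]
        exact traceNorm_le_sqrt_card_mul_sum_normSq _
    _ = 2 ^ (n * t) * √(2 ^ (n - 1) * (2 ^ t - 1)) := by
        rw [← mul_assoc, ← sq, Real.sqrt_mul (by positivity), Real.sqrt_sq (by positivity)]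

/-- Trace-norm bound for the deviation matrix `A`. -/
theorem traceNorm_deviation_le (n t : ℕ) (hn : 1 ≤ n) (ht : 1 ≤ t) :
    traceNorm (∑ k ∈ Omega n, ∑ i : Fin t → (Fin n → ZMod 2),
        ∑ x ∈ Finset.univ.filter (fun x : Fin t → ZMod 2 => x ≠ 0),
          Matrix.single i (fun s => i s + x s • k) (1 : ℂ))
      ≤ 2 ^ (n * t) * Real.sqrt (2 ^ (n - 1) * (2 ^ t - 1)) :=
  traceNorm_deviation_le_general n t hn
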